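/- arXiv:0810.2532 — 4 statements merged into one kernel-verified Lean document; each statement's English description precedes it below -/
import Mathlib

section
/- For every μ ≥ 0, the convolution integral 16∫₀^μ (μ−r)·r·e^{−2(μ−r)²−2r²} dr equals [2μ − √π·e^{μ²}·(1−2μ²)·erf(μ)]·e^{−2μ²}. -/
open MeasureTheory Real

/-- The error function. -/
noncomputable def erf (x : ℝ) : ℝ := (2 / Real.sqrt π) * ∫ t in (0:ℝ)..x, Real.exp (-t ^ 2)

/-!
Since `2(μ - r)² + 2r² = (2r - μ)² + μ²`, the substitution `s = 2r - μ` turns the integral into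
`e^{-μ²}/8 · ∫_{-μ}^{μ} (μ² - s²) e^{-s²} ds`. Integrating `s² e^{-s²}` by parts, the integrand
`(a - s²) e^{-s²}` has the odd antiderivative `s e^{-s²}/2 + (a - 1/2)(√π/2) erf s`.
-/

lemma hasDerivAt_erf (x : ℝ) : HasDerivAt erf (2 / √π * exp (-x ^ 2)) x := by
  have hcont : Continuous fun t : ℝ => exp (-t ^ 2) := by fun_prop
  exact (intervalIntegral.integral_hasDerivAt_right (hcont.intervalIntegrable 0 x)
    (hcont.stronglyMeasurableAtFilter _ _) hcont.continuousAt).const_mul _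

lemma erf_neg (x : ℝ) : erf (-x) = -erf x := by
  have h := intervalIntegral.integral_comp_neg (a := 0) (b := x) fun t : ℝ => exp (-t ^ 2)
  simp only [neg_sq, neg_zero] at h
  rw [erf, erf, intervalIntegral.integral_symm (-x) 0, ← h]
  ring

lemma hasDerivAt_gaussian_antideriv (a s : ℝ) :
    HasDerivAt (fun s => s / 2 * exp (-s ^ 2) + (a - 1 / 2) * (√π / 2) * erf s)
      ((a - s ^ 2) * exp (-s ^ 2)) s := by
  have hexp : HasDerivAt (fun s : ℝ => exp (-s ^ 2)) (exp (-s ^ 2) * (-(2 * s))) s := by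
    simpa using ((hasDerivAt_pow 2 s).neg).exp
  have hsum := (((hasDerivAt_id' s).div_const 2).mul hexp).add
    ((hasDerivAt_erf s).const_mul ((a - 1 / 2) * (√π / 2)))
  refine hsum.congr_deriv ?_
  have hsπ : √π ≠ 0 := (Real.sqrt_pos.mpr pi_pos).ne'
  field_simp
  ring

lemma integral_sub_sq_mul_exp_neg_sq (μ : ℝ) :
    ∫ s in -μ..μ, (μ ^ 2 - s ^ 2) * exp (-s ^ 2) = μ * exp (-μ ^ 2) + (μ ^ 2 - 1 / 2) * √π * erf μ := by
  have hcont : Continuous fun s : ℝ => (μ ^ 2 - s ^ 2) * exp (-s ^ 2) := by fun_prop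
  rw [intervalIntegral.integral_eq_sub_of_hasDerivAt
    (fun s _ => hasDerivAt_gaussian_antideriv (μ ^ 2) s) (hcont.intervalIntegrable _ _)]
  simp only [neg_sq, erf_neg]
  ring

lemma integral_convolution_eq_exp_mul_integral (μ : ℝ) :
    ∫ r in (0:ℝ)..μ, (μ - r) * r * exp (-2 * (μ - r) ^ 2 - 2 * r ^ 2) =
      exp (-μ ^ 2) / 8 * ∫ s in -μ..μ, (μ ^ 2 - s ^ 2) * exp (-s ^ 2) := by
  have hintegrand : ∀ r : ℝ, (μ - r) * r * exp (-2 * (μ - r) ^ 2 - 2 * r ^ 2) =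
      exp (-μ ^ 2) / 4 * ((μ ^ 2 - (2 * r - μ) ^ 2) * exp (-(2 * r - μ) ^ 2)) := by
    intro r
    rw [show -2 * (μ - r) ^ 2 - 2 * r ^ 2 = -μ ^ 2 + -(2 * r - μ) ^ 2 by ring, exp_add]
    ring
  simp only [hintegrand, intervalIntegral.integral_const_mul]
  rw [intervalIntegral.integral_comp_mul_sub (fun s => (μ ^ 2 - s ^ 2) * exp (-s ^ 2))
    two_ne_zero μ]
  simp only [mul_zero, zero_sub, show 2 * μ - μ = μ by ring, smul_eq_mul]
  ring

theorem stmt_8_general (μ : ℝ) :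
    16 * ∫ r in (0:ℝ)..μ, (μ - r) * r * Real.exp (-2 * (μ - r) ^ 2 - 2 * r ^ 2) =
      (2 * μ - Real.sqrt π * Real.exp (μ ^ 2) * (1 - 2 * μ ^ 2) * erf μ) *
        Real.exp (-2 * μ ^ 2) := by
  have hsq : exp (-2 * μ ^ 2) = exp (-μ ^ 2) * exp (-μ ^ 2) := by rw [← exp_add]; ring_nf
  have hinv : exp (μ ^ 2) * exp (-μ ^ 2) = 1 := by rw [← exp_add]; simp
  rw [integral_convolution_eq_exp_mul_integral, integral_sub_sq_mul_exp_neg_sq, hsq]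
  linear_combination √π * (1 - 2 * μ ^ 2) * erf μ * exp (-μ ^ 2) * hinv

theorem stmt_8 (μ : ℝ) (hμ : 0 ≤ μ) :
    16 * ∫ r in (0:ℝ)..μ, (μ - r) * r * Real.exp (-2 * (μ - r) ^ 2 - 2 * r ^ 2) =
      (2 * μ - Real.sqrt π * Real.exp (μ ^ 2) * (1 - 2 * μ ^ 2) * erf μ) *
        Real.exp (-2 * μ ^ 2) :=
  stmt_8_general μ
end

section
/- For every η ≥ 0, 16∫₀^∞ (η+r)r·e^{−2(η+r)²−2r²}dr = (1/2)[2η + √π·e^{η²}·(1−2η²)·(1−erf(η))]·e^{−2η²}. -/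
open MeasureTheory Real

lemma shift_Ioi (f : ℝ → ℝ) (a c : ℝ) :
    ∫ x in Set.Ioi a, f (x + c) = ∫ x in Set.Ioi (a + c), f x := by
  rw [← integral_indicator measurableSet_Ioi, ← integral_indicator measurableSet_Ioi,
      ← integral_add_right_eq_self (Set.indicator (Set.Ioi (a + c)) f) c]
  congr 1
  ext x
  simp [Set.indicator_apply, Set.mem_Ioi, add_lt_add_iff_right]

theorem stmt_10 (η : ℝ) (hη : 0 ≤ η) :
    16 * ∫ r in Set.Ioi (0:ℝ), (η + r) * r * Real.exp (-2 * (η + r) ^ 2 - 2 * r ^ 2) =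
      (1 / 2) * (2 * η + Real.sqrt π * Real.exp (η ^ 2) * (1 - 2 * η ^ 2) * (1 - erf η)) *
        Real.exp (-2 * η ^ 2) := by
  set g : ℝ → ℝ := fun r => Real.exp (-2 * (η + r) ^ 2 - 2 * r ^ 2) with hg_def
  set G : ℝ → ℝ := fun r => (-(r/8) - η/16) * g r with hG_def
  -- derivative
  have hderiv : ∀ r : ℝ, HasDerivAt G ((η + r) * r * g r - (1/8 - η^2/4) * g r) r := by
    intro r
    have h1 : HasDerivAt (fun x : ℝ => (η + x) ^ 2) (2 * (η + r)) r := by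
      simpa using (((hasDerivAt_id r).const_add η).fun_pow 2)
    have h2 : HasDerivAt (fun x : ℝ => x ^ 2) (2 * r) r := by
      simpa using hasDerivAt_pow 2 r
    have hq : HasDerivAt (fun x : ℝ => -2 * (η + x) ^ 2 - 2 * x ^ 2)
        (-2 * (2 * (η + r)) - 2 * (2 * r)) r := (h1.const_mul (-2)).sub (h2.const_mul 2)
    have hg' : HasDerivAt g (Real.exp (-2 * (η + r) ^ 2 - 2 * r ^ 2) *
        (-2 * (2 * (η + r)) - 2 * (2 * r))) r := hq.exp
    have hA : HasDerivAt (fun x : ℝ => -(x/8) - η/16) (-(1/8)) r := by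
      simpa using (((hasDerivAt_id r).div_const 8).neg.sub_const (η/16))
    have := hA.fun_mul hg'
    refine this.congr_deriv ?_
    symm
    show _ = -(1/8) * g r + (-(r/8) - η/16) * (g r * (-2 * (2 * (η + r)) - 2 * (2 * r)))
    ring
  -- integrability
  have hgint : Integrable g := by
    have h := (integrable_exp_neg_mul_sq (by norm_num : (0:ℝ) < 4)).comp_add_right (η/2)
    have h2 := h.const_mul (Real.exp (-η^2))
    apply h2.congr
    filter_upwards with x
    simp only [hg_def]
    rw [← Real.exp_add, show -η^2 + (-4 * (x + η/2)^2) = -2*(η+x)^2 - 2*x^2 by ring]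
  have hfint : Integrable (fun r => (η + r) * r * g r) := by
    have hx2 : Integrable fun x : ℝ => x ^ 2 * Real.exp (-4 * x ^ 2) := by
      have := integrable_rpow_mul_exp_neg_mul_sq (b := 4) (by norm_num) (s := 2) (by norm_num)
      simpa [Real.rpow_two] using this
    have hc : Integrable fun x : ℝ => (x ^ 2 - η^2/4) * Real.exp (-4 * x ^ 2) := by
      have := hx2.sub ((integrable_exp_neg_mul_sq (by norm_num : (0:ℝ) < 4)).const_mul (η^2/4))
      apply this.congr
      filter_upwards with x
      simp only [Pi.sub_apply]
      ring
    have h := (hc.comp_add_right (η/2)).const_mul (Real.exp (-η^2))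
    apply h.congr
    filter_upwards with x
    simp only [hg_def]
    rw [mul_comm (Real.exp (-η^2)), mul_assoc, ← Real.exp_add,
        show (-4 * (x + η/2)^2) + (-η^2) = -2*(η+x)^2 - 2*x^2 by ring]
    ring
  -- limit at infinity
  have hGtend : Filter.Tendsto G Filter.atTop (nhds 0) := by
    have h := Real.tendsto_pow_mul_exp_neg_atTop_nhds_zero 1
    simp only [pow_one] at h
    apply squeeze_zero_norm' _ h
    filter_upwards [Filter.eventually_ge_atTop (1:ℝ), Filter.eventually_ge_atTop η] with r h1 h2
    have hE : -2 * (η + r) ^ 2 - 2 * r ^ 2 ≤ -r := by nlinarith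
    have hexp : g r ≤ Real.exp (-r) := Real.exp_le_exp.mpr hE
    have hgpos : 0 < g r := Real.exp_pos _
    have habs : ‖G r‖ = |(-(r/8) - η/16)| * g r := by
      rw [hG_def]; simp only [norm_mul, Real.norm_eq_abs]
      rw [abs_of_pos hgpos]
    rw [habs, show |(-(r/8) - η/16)| = r/8 + η/16 by rw [abs_of_nonpos (by linarith)]; ring]
    exact mul_le_mul (by linarith) hexp hgpos.le (by linarith)
  -- FTC
  have hFTC : ∫ x in Set.Ioi (0:ℝ), ((η + x) * x * g x - (1/8 - η^2/4) * g x) = 0 - G 0 :=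
    integral_Ioi_of_hasDerivAt_of_tendsto' (fun x _ => hderiv x)
      ((hfint.sub (hgint.const_mul _)).integrableOn) hGtend
  have hsplit : ∫ x in Set.Ioi (0:ℝ), ((η + x) * x * g x - (1/8 - η^2/4) * g x)
      = (∫ r in Set.Ioi (0:ℝ), (η + r) * r * g r) - (1/8 - η^2/4) * ∫ r in Set.Ioi (0:ℝ), g r := by
    rw [integral_sub hfint.integrableOn ((hgint.const_mul _).integrableOn), integral_const_mul]
  have hG0 : G 0 = -(η/16) * Real.exp (-2 * η^2) := by
    simp only [hG_def, hg_def]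
    norm_num
  -- gaussian integrals
  have hexpint : Integrable (fun u : ℝ => Real.exp (-u^2)) := by
    simpa using integrable_exp_neg_mul_sq (by norm_num : (0:ℝ) < 1)
  have hIoi0 : ∫ u in Set.Ioi (0:ℝ), Real.exp (-u^2) = Real.sqrt π / 2 := by
    have := integral_gaussian_Ioi 1
    simpa using this
  have htail : ∫ u in Set.Ioi η, Real.exp (-u^2)
      = Real.sqrt π / 2 - ∫ t in (0:ℝ)..η, Real.exp (-t^2) := by
    have hu := setIntegral_union (Set.Ioc_disjoint_Ioi le_rfl) measurableSet_Ioi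
      (hexpint.integrableOn (s := Set.Ioc 0 η)) (hexpint.integrableOn (s := Set.Ioi η))
    rw [Set.Ioc_union_Ioi_eq_Ioi hη] at hu
    rw [intervalIntegral.integral_of_le hη]
    rw [hu] at hIoi0
    linarith
  -- substitution
  have hsub : ∫ r in Set.Ioi (0:ℝ), g r
      = Real.exp (-η^2) * ((1/2) * ∫ u in Set.Ioi η, Real.exp (-u^2)) := by
    have e1 : ∫ r in Set.Ioi (0:ℝ), g r
        = ∫ r in Set.Ioi (0:ℝ), Real.exp (-η^2) * Real.exp (-(2*r + η)^2) := by
      refine setIntegral_congr_fun measurableSet_Ioi fun r _ => ?_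
      simp only [hg_def]
      rw [← Real.exp_add, show -η^2 + (-(2*r + η)^2) = -2*(η+r)^2 - 2*r^2 by ring]
    rw [e1, integral_const_mul]
    congr 1
    have e2 := integral_comp_mul_left_Ioi (fun x => Real.exp (-(x + η)^2)) 0
      (by norm_num : (0:ℝ) < 2)
    simp only [mul_zero, smul_eq_mul] at e2
    have e3 := shift_Ioi (fun u => Real.exp (-u^2)) 0 η
    simp only [zero_add] at e3
    rw [show (fun r : ℝ => Real.exp (-(2*r + η)^2)) = fun r : ℝ => Real.exp (-((2*r) + η)^2) by rfl]
    calc ∫ r in Set.Ioi (0:ℝ), Real.exp (-(2*r + η)^2)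
        = 2⁻¹ * ∫ x in Set.Ioi (0:ℝ), Real.exp (-(x + η)^2) := e2
      _ = 2⁻¹ * ∫ u in Set.Ioi η, Real.exp (-u^2) := by rw [e3]
      _ = (1/2) * ∫ u in Set.Ioi η, Real.exp (-u^2) := by norm_num
  -- combine
  have hval : ∫ r in Set.Ioi (0:ℝ), (η + r) * r * g r
      = η/16 * Real.exp (-2 * η^2)
        + (1/8 - η^2/4) * (Real.exp (-η^2) * ((1/2) * (Real.sqrt π / 2 - ∫ t in (0:ℝ)..η, Real.exp (-t^2)))) := by
    rw [hsplit, hG0] at hFTC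
    rw [hsub, htail] at hFTC
    linarith
  rw [hval, erf]
  have hs : Real.sqrt π ≠ 0 := (Real.sqrt_pos.mpr Real.pi_pos).ne'
  have hee : Real.exp (η^2) * Real.exp (-(η^2*2)) = Real.exp (-η^2) := by
    rw [← Real.exp_add]; congr 1; ring
  set I0 := ∫ t in (0:ℝ)..η, Real.exp (-t^2) with hI0
  set s := Real.sqrt π with hsπ
  field_simp
  ring_nf
  linear_combination (η^2*s*128 - η^2*I0*256 - s*64 + I0*128) * hee
end

section
/- The function R(η) = (1/2)[2|η| + √π·e^{η²}·(1−2η²)·(1−erf(|η|))]·e^{−2η²} is even in η and attains its maximum at η = 0, with R(0) = √π/2. -/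
open Real

/-- The probability density of the difference η = r − s. -/
noncomputable def R (η : ℝ) : ℝ :=
  (1 / 2) * (2 * |η| + Real.sqrt π * Real.exp (η ^ 2) * (1 - 2 * η ^ 2) * (1 - erf |η|)) *
    Real.exp (-2 * η ^ 2)

/-!
For `x = |η|` write `E = exp (-x²)` and `I = ∫₀ˣ exp (-t²)`, so that
`R η = x E² + (1 - 2x²) (√π/2 - I) E`. Everything follows from the elementary bounds
`x E ≤ I ≤ √π/2` and `(1 + x²) E ≤ 1` (the latter from `1 + x² ≤ exp x²`). If `2x² ≥ 1` the second
term is nonpositive and `x E² ≤ x E ≤ 1/2`. If `2x² ≤ 1` the second term is largest when `I = x E`,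
and then `R η ≤ (√π/2) (1 - 2x²) E + 2x³ E ≤ (√π/2) (1 + x²) E ≤ √π/2`.
-/

open MeasureTheory

lemma mul_exp_neg_sq_le_integral {x : ℝ} (hx : 0 ≤ x) :
    x * exp (-x ^ 2) ≤ ∫ t in (0 : ℝ)..x, exp (-t ^ 2) := by
  have hmono := intervalIntegral.integral_mono_on hx intervalIntegrable_const
    ((continuous_exp.comp (continuous_pow 2).neg).intervalIntegrable (μ := volume) _ _)
    fun t ht => exp_le_exp.2 (neg_le_neg (pow_le_pow_left₀ ht.1 ht.2 2))
  simpa using hmono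

lemma integral_exp_neg_sq_le {x : ℝ} (hx : 0 ≤ x) :
    ∫ t in (0 : ℝ)..x, exp (-t ^ 2) ≤ √π / 2 := by
  have hint : IntegrableOn (fun t : ℝ => exp (-t ^ 2)) (Set.Ioi 0) := by
    simpa using (integrable_exp_neg_mul_sq one_pos).integrableOn
  calc ∫ t in (0 : ℝ)..x, exp (-t ^ 2) = ∫ t in Set.Ioc 0 x, exp (-t ^ 2) :=
        intervalIntegral.integral_of_le hx
    _ ≤ ∫ t in Set.Ioi 0, exp (-t ^ 2) :=
        setIntegral_mono_set hint (.of_forall fun t => (exp_pos _).le)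
          (.of_forall Set.Ioc_subset_Ioi_self)
    _ = √π / 2 := by simpa using integral_gaussian_Ioi 1

lemma one_add_sq_mul_exp_neg_sq_le_one (x : ℝ) : (1 + x ^ 2) * exp (-x ^ 2) ≤ 1 := by
  calc (1 + x ^ 2) * exp (-x ^ 2) ≤ exp (x ^ 2) * exp (-x ^ 2) := by
        gcongr; linarith [add_one_le_exp (x ^ 2)]
    _ = 1 := by rw [← exp_add, add_neg_cancel, exp_zero]

lemma R_abs (η : ℝ) : R |η| = R η := by
  simp [R]

lemma R_eq_of_nonneg {x : ℝ} (hx : 0 ≤ x) :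
    R x = x * exp (-x ^ 2) ^ 2
      + (1 - 2 * x ^ 2) * (√π / 2 - ∫ t in (0 : ℝ)..x, exp (-t ^ 2)) * exp (-x ^ 2) := by
  have hexp : exp (x ^ 2) * exp (-x ^ 2) = 1 := by rw [← exp_add, add_neg_cancel, exp_zero]
  have hexp2 : exp (-2 * x ^ 2) = exp (-x ^ 2) ^ 2 := by rw [← exp_nat_mul]; ring_nf
  have herf : √π * (1 - 2 / √π * ∫ t in (0 : ℝ)..x, exp (-t ^ 2))
      = 2 * (√π / 2 - ∫ t in (0 : ℝ)..x, exp (-t ^ 2)) := by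
    field_simp [(sqrt_pos.2 pi_pos).ne']
  rw [R, erf, abs_of_nonneg hx, hexp2]
  linear_combination (exp (x ^ 2) * (1 - 2 * x ^ 2) * exp (-x ^ 2) ^ 2 / 2) * herf
    + ((1 - 2 * x ^ 2) * (√π / 2 - ∫ t in (0 : ℝ)..x, exp (-t ^ 2)) * exp (-x ^ 2)) * hexp

lemma mul_sq_add_tail_le {x E I c : ℝ} (hE : 0 ≤ E) (hxE : (1 + x ^ 2) * E ≤ 1)
    (hI : x * E ≤ I) (hIc : I ≤ c / 2) (hc : 1 ≤ c) :
    x * E ^ 2 + (1 - 2 * x ^ 2) * (c / 2 - I) * E ≤ c / 2 := by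
  have hE1 : E ≤ 1 := by nlinarith [mul_nonneg (sq_nonneg x) hE]
  have hhalf : x * E ≤ 1 / 2 := by nlinarith [sq_nonneg (x - 1)]
  rcases le_total (2 * x ^ 2) 1 with hsmall | hlarge
  · have htail : (1 - 2 * x ^ 2) * (c / 2 - I) * E ≤ (1 - 2 * x ^ 2) * (c / 2 - x * E) * E := by
      gcongr
    have hcube : x * E ^ 2 + (1 - 2 * x ^ 2) * (c / 2 - x * E) * E ≤ (c / 2) * (1 + x ^ 2) * E := by
      nlinarith [mul_nonneg (mul_nonneg (sq_nonneg x) hE) (by linarith : 0 ≤ 3 * c - 4 * (x * E))]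
    nlinarith [mul_le_mul_of_nonneg_left hxE (by linarith : 0 ≤ c / 2)]
  · have htail : (1 - 2 * x ^ 2) * (c / 2 - I) * E ≤ 0 :=
      mul_nonpos_of_nonpos_of_nonneg (mul_nonpos_of_nonpos_of_nonneg (by linarith) (by linarith)) hE
    nlinarith [mul_le_mul hhalf hE1 hE (by norm_num)]

lemma R_le_sqrt_pi_div_two_of_nonneg {x : ℝ} (hx : 0 ≤ x) : R x ≤ √π / 2 := by
  rw [R_eq_of_nonneg hx]
  exact mul_sq_add_tail_le (exp_pos _).le (one_add_sq_mul_exp_neg_sq_le_one x)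
    (mul_exp_neg_sq_le_integral hx) (integral_exp_neg_sq_le hx)
    (one_le_sqrt.2 (by linarith [pi_gt_three]))

lemma R_zero : R 0 = √π / 2 := by
  simp [R, erf]
  ring

theorem stmt_11 :
    (∀ η : ℝ, R (-η) = R η) ∧ (∀ η : ℝ, R η ≤ R 0) ∧ R 0 = Real.sqrt π / 2 := by
  refine ⟨fun η => by simp [R], fun η => ?_, R_zero⟩
  rw [R_zero, ← R_abs]
  exact R_le_sqrt_pi_div_two_of_nonneg (abs_nonneg η)
end

section
/- For every nonnegative integer n and real x > 0, I_n(x) := √π·∫₀^∞ μ^{2n}·e^{−μ²/x}·erf(μ) dμ = n!·x^{n+1}·₂F₁(n+1, 1/2; 3/2; −x). -/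
open MeasureTheory Real

/-- The Gauss hypergeometric function ₂F₁(a, 1/2; 3/2; z), via its Euler-type integral
representation `∫₀¹ (1 - z t²)^(-a) dt`, which agrees with the analytic continuation of the
hypergeometric series for negative real argument `z`. -/
noncomputable def hyp2F1half (a z : ℝ) : ℝ := ∫ t in (0:ℝ)..1, (1 - z * t ^ 2) ^ (-a)

/-!
Substituting `t = μ s` gives `√π erf μ = 2μ ∫₀¹ exp(-μ²s²) ds`, so by Fubini the left-hand side is
`2 ∫₀¹ ∫₀^∞ μ^(2n+1) exp(-(1/x + s²) μ²) dμ ds`. The inner integral is a Gamma integral in `μ²`,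
equal to `n! / (2 (1/x + s²)^(n+1)) = n! x^(n+1) / (2 (1 + x s²)^(n+1))`, and what remains is
the Euler integral defining `hyp2F1half (n + 1) (-x)`.
-/

open Set
open scoped Nat

theorem integral_pow_mul_exp_neg_mul_sq_Ioi (n : ℕ) {a : ℝ} (ha : 0 < a) :
    ∫ μ in Ioi (0:ℝ), μ ^ (2 * n + 1) * exp (-a * μ ^ 2) = n ! / (2 * a ^ (n + 1)) := by
  have hsubst := integral_comp_rpow_Ioi_of_pos (g := fun u : ℝ => u ^ n * exp (-(a * u)))
    two_pos
  have hlhs : ∀ μ ∈ Ioi (0:ℝ), μ ^ (2 * n + 1) * exp (-a * μ ^ 2)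
      = 2⁻¹ * ((2 * μ ^ ((2:ℝ) - 1)) • ((μ ^ (2:ℝ)) ^ n * exp (-(a * μ ^ (2:ℝ))))) := by
    intro μ _
    norm_num [smul_eq_mul, ← pow_mul]
    ring_nf
  have hgamma : ∫ u in Ioi (0:ℝ), u ^ n * exp (-(a * u)) = n ! / a ^ (n + 1) := by
    have := integral_rpow_mul_exp_neg_mul_Ioi (a := n + 1) (by positivity) ha
    rw [add_sub_cancel_right, Gamma_nat_eq_factorial] at this
    norm_cast at this
    rw [this, one_div, inv_pow, div_eq_inv_mul]
  rw [setIntegral_congr_fun measurableSet_Ioi hlhs, integral_const_mul, hsubst, hgamma]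
  field_simp

theorem sqrt_pi_mul_erf (μ : ℝ) :
    √π * erf μ = 2 * μ * ∫ s in (0:ℝ)..1, exp (-(μ * s) ^ 2) := by
  rcases eq_or_ne μ 0 with rfl | hμ
  · simp [erf]
  rw [intervalIntegral.integral_comp_mul_left (fun t => exp (-t ^ 2)) hμ, erf]
  simp only [smul_eq_mul, mul_zero, mul_one]
  field_simp

theorem integrable_pow_mul_exp_neg_add_sq_mul_sq (n : ℕ) {c : ℝ} (hc : 0 < c) :
    Integrable (fun p : ℝ × ℝ => p.1 ^ (2 * n + 1) * exp (-(c + p.2 ^ 2) * p.1 ^ 2))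
      ((volume.restrict (Ioi 0)).prod (volume.restrict (Ioc 0 1))) := by
  have hmoment : IntegrableOn (fun μ : ℝ => μ ^ (2 * n + 1) * exp (-c * μ ^ 2)) (Ioi 0) := by
    have := integrableOn_rpow_mul_exp_neg_mul_sq hc (s := (2 * n + 1 : ℕ))
      (by linarith [(2 * n + 1).cast_nonneg (α := ℝ)])
    simpa only [rpow_natCast] using this
  have hdom := hmoment.mul_prod
    (integrableOn_const (s := Ioc (0:ℝ) 1) (μ := volume) (C := (1:ℝ)) (by simp))
  refine hdom.mono' (by fun_prop) ?_
  rw [Measure.prod_restrict]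
  filter_upwards [ae_restrict_mem (measurableSet_Ioi.prod measurableSet_Ioc)] with p hp
  obtain ⟨μ, s⟩ := p
  have hμ : 0 < μ := hp.1
  rw [Real.norm_eq_abs, abs_of_nonneg (by positivity), mul_one]
  gcongr
  nlinarith [sq_nonneg (s * μ)]

theorem stmt_13 (n : ℕ) (x : ℝ) (hx : 0 < x) :
    Real.sqrt π * ∫ μ in Set.Ioi (0:ℝ), μ ^ (2 * n) * Real.exp (-μ ^ 2 / x) * erf μ =
      (n : ℕ).factorial * x ^ (n + 1) * hyp2F1half (n + 1) (-x) := by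
  calc √π * ∫ μ in Ioi 0, μ ^ (2 * n) * exp (-μ ^ 2 / x) * erf μ
      = 2 * ∫ μ in Ioi 0, ∫ s in Ioc 0 1, μ ^ (2 * n + 1) * exp (-(x⁻¹ + s ^ 2) * μ ^ 2) := by
        rw [← integral_const_mul, ← integral_const_mul]
        refine setIntegral_congr_fun measurableSet_Ioi fun μ _ => ?_
        rw [mul_left_comm, sqrt_pi_mul_erf, intervalIntegral.integral_of_le zero_le_one,
          ← integral_const_mul, ← integral_const_mul, ← integral_const_mul]
        refine integral_congr_ae (ae_of_all _ fun s => ?_)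
        beta_reduce
        rw [show -(x⁻¹ + s ^ 2) * μ ^ 2 = -μ ^ 2 / x + -(μ * s) ^ 2 by ring, exp_add]
        ring
    _ = 2 * ∫ s in Ioc 0 1, ∫ μ in Ioi 0, μ ^ (2 * n + 1) * exp (-(x⁻¹ + s ^ 2) * μ ^ 2) := by
        rw [integral_integral_swap (integrable_pow_mul_exp_neg_add_sq_mul_sq n (inv_pos.2 hx))]
    _ = ∫ s in Ioc 0 1, n ! * x ^ (n + 1) * (1 - -x * s ^ 2) ^ (-((n : ℝ) + 1)) := by
        rw [← integral_const_mul]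
        refine setIntegral_congr_fun measurableSet_Ioc fun s _ => ?_
        have hpos : 0 < 1 + x * s ^ 2 := by positivity
        rw [integral_pow_mul_exp_neg_mul_sq_Ioi n (by positivity), neg_mul, sub_neg_eq_add,
          rpow_neg hpos.le, show (n : ℝ) + 1 = (n + 1 : ℕ) by push_cast; ring, rpow_natCast,
          show x⁻¹ + s ^ 2 = x⁻¹ * (1 + x * s ^ 2) by field_simp, mul_pow, inv_pow]
        field_simp
    _ = n ! * x ^ (n + 1) * hyp2F1half (n + 1) (-x) := by
        rw [hyp2F1half, intervalIntegral.integral_of_le zero_le_one, integral_const_mul]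
end
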